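/- arXiv:2405.03816 — 2 statements merged into one kernel-verified Lean document; each statement's English description precedes it below -/
import Mathlib

section
/- Let β ∈ (1,2] satisfy 1 = Σ_{i=1}^{N} β^{-n_i} for some pairwise distinct n_1 < ... < n_N in ℕ. If a real number s ∈ [0,1] has a β-expansion ending in 0^∞ with at least one nonzero digit, then s has infinitely many distinct β-expansions. -/
/-!
The relation `1 = ∑ k, β ^ (-m k)` lets a digit 1 at position `j` be traded for digits 1 at the
positions `j + m k`, all beyond `j`, without changing the value. Record an expansion ending in
`0^∞` by the finite set of positions of its ones, and make this trade at the largest position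
again and again: the largest position strictly increases, so the expansions obtained are
pairwise distinct.
-/

open Finset

section ReplaceMax

variable {ι : Type*} [Fintype ι] (d : ι → ℕ)

def replaceMax (A : Finset ℕ) : Finset ℕ :=
  A.erase (A.sup id) ∪ univ.image (fun k => A.sup id + d k)

variable {d}

theorem lt_sup_replaceMax [Nonempty ι] (hpos : ∀ k, 0 < d k) (A : Finset ℕ) :
    A.sup id < (replaceMax d A).sup id := by
  obtain ⟨k⟩ := ‹Nonempty ι›
  have hmem : A.sup id + d k ∈ replaceMax d A :=
    mem_union_right _ (mem_image_of_mem _ (mem_univ k))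
  exact (Nat.lt_add_of_pos_right (hpos k)).trans_le (le_sup (f := id) hmem)

theorem replaceMax_nonempty [Nonempty ι] (A : Finset ℕ) : (replaceMax d A).Nonempty :=
  (univ_nonempty.image _).mono subset_union_right

theorem sum_replaceMax {M : Type*} [AddCommMonoid M] (w : ℕ → M)
    (hw : ∀ j, ∑ k, w (j + d k) = w j) (hd : Function.Injective d) (hpos : ∀ k, 0 < d k)
    {A : Finset ℕ} (hA : A.Nonempty) :
    ∑ i ∈ replaceMax d A, w i = ∑ i ∈ A, w i := by
  have hJ : A.sup id ∈ A := by
    obtain ⟨i, hi, hJi⟩ := A.exists_mem_eq_sup hA id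
    rwa [hJi]
  set J := A.sup id
  have hdisj : Disjoint (A.erase J) (univ.image fun k => J + d k) := by
    refine disjoint_left.mpr fun i hi hi' => ?_
    obtain ⟨k, -, rfl⟩ := mem_image.mp hi'
    have : J + d k ≤ J := le_sup (f := id) (mem_of_mem_erase hi)
    have := hpos k
    omega
  rw [replaceMax, sum_union hdisj, sum_image fun a _ b _ h => hd (by simpa using h), hw,
    sum_erase_add _ _ hJ]

theorem infinite_setOf_sum_eq {M : Type*} [AddCommMonoid M] [Nonempty ι] (w : ℕ → M)
    (hw : ∀ j, ∑ k, w (j + d k) = w j) (hd : Function.Injective d) (hpos : ∀ k, 0 < d k)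
    {A : Finset ℕ} (hA : A.Nonempty) :
    {B : Finset ℕ | ∑ i ∈ B, w i = ∑ i ∈ A, w i}.Infinite := by
  have hsum : ∀ n, ∑ i ∈ (replaceMax d)^[n] A, w i = ∑ i ∈ A, w i := by
    intro n
    induction n with
    | zero => rfl
    | succ n ih =>
      have hne : ((replaceMax d)^[n] A).Nonempty := by
        cases n with
        | zero => exact hA
        | succ n => rw [Function.iterate_succ_apply']; exact replaceMax_nonempty _
      rw [Function.iterate_succ_apply', sum_replaceMax w hw hd hpos hne, ih]
  have hmono : StrictMono fun n => ((replaceMax d)^[n] A).sup id :=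
    strictMono_nat_of_lt_succ fun n => by
      show _ < ((replaceMax d)^[n + 1] A).sup id
      rw [Function.iterate_succ_apply']
      exact lt_sup_replaceMax hpos _
  exact Set.infinite_of_injective_forall_mem (fun a b h => hmono.injective (congrArg (·.sup id) h))
    hsum

end ReplaceMax

theorem sum_inv_pow_add_eq {K : Type*} [Field K] {β : K} {ι : Type*} [Fintype ι] {d : ι → ℕ}
    (hd : ∑ k, (β ^ d k)⁻¹ = 1) (j : ℕ) :
    ∑ k, (β ^ (j + d k + 1))⁻¹ = (β ^ (j + 1))⁻¹ := by
  have hsplit : ∀ k, (β ^ (j + d k + 1))⁻¹ = (β ^ (j + 1))⁻¹ * (β ^ d k)⁻¹ :=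
    fun k => by rw [add_right_comm, pow_add, mul_inv]
  rw [sum_congr rfl fun k _ => hsplit k, ← mul_sum, hd, mul_one]

def digitsOfFinset (A : Finset ℕ) (i : ℕ) : ℕ := if i ∈ A then 1 else 0

theorem digitsOfFinset_le_one (A : Finset ℕ) (i : ℕ) : digitsOfFinset A i ≤ 1 := by
  unfold digitsOfFinset; split <;> omega

theorem digitsOfFinset_injective : Function.Injective digitsOfFinset := fun A B h =>
  ext fun i => by
    have := congrFun h i
    unfold digitsOfFinset at this
    split_ifs at this <;> simp_all

theorem tsum_digitsOfFinset_mul (A : Finset ℕ) (w : ℕ → ℝ) :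
    ∑' i, (digitsOfFinset A i : ℝ) * w i = ∑ i ∈ A, w i := by
  rw [tsum_eq_sum (s := A) fun i hi => by simp [digitsOfFinset, hi]]
  exact sum_congr rfl fun i hi => by simp [digitsOfFinset, hi]

theorem eq_digitsOfFinset {x : ℕ → ℕ} (hx : ∀ i, x i ≤ 1) {M : ℕ}
    (hM : ∀ i, M ≤ i → x i = 0) :
    x = digitsOfFinset ((range M).filter fun i => x i ≠ 0) := by
  funext i
  have := hx i
  by_cases hi : M ≤ i
  · simp [digitsOfFinset, hM i hi]
  · simp only [digitsOfFinset, mem_filter, mem_range]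
    split_ifs <;> omega

theorem infinitely_many_beta_expansions_general (β : ℝ)
    (N : ℕ) (hN : 0 < N) (m : Fin N → ℕ) (hm : StrictMono m) (hm1 : ∀ i, 1 ≤ m i)
    (halg : (1 : ℝ) = ∑ i : Fin N, (β ^ (m i))⁻¹)
    (s : ℝ)
    (x : ℕ → ℕ) (hx : ∀ i, x i ≤ 1)
    (hexp : ∑' i : ℕ, (x i : ℝ) * (β ^ (i + 1))⁻¹ = s)
    (htail : ∃ M : ℕ, ∀ i, M ≤ i → x i = 0)
    (hnonzero : ∃ j, x j ≠ 0) :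
    Set.Infinite {y : ℕ → ℕ | (∀ i, y i ≤ 1) ∧
      ∑' i : ℕ, (y i : ℝ) * (β ^ (i + 1))⁻¹ = s} := by
  have : Nonempty (Fin N) := ⟨⟨0, hN⟩⟩
  obtain ⟨M, hM⟩ := htail
  set A := (range M).filter fun i => x i ≠ 0
  have hxA : x = digitsOfFinset A := eq_digitsOfFinset hx hM
  have hA : A.Nonempty := by
    obtain ⟨j, hj⟩ := hnonzero
    exact ⟨j, by simpa [hxA, digitsOfFinset] using hj⟩
  have hsA : ∑ i ∈ A, (β ^ (i + 1))⁻¹ = s := by rw [← hexp, hxA, tsum_digitsOfFinset_mul]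
  have hinf := infinite_setOf_sum_eq (fun i => (β ^ (i + 1))⁻¹) (sum_inv_pow_add_eq halg.symm)
    hm.injective hm1 hA
  refine (hinf.image digitsOfFinset_injective.injOn).mono ?_
  rintro _ ⟨B, hB, rfl⟩
  exact ⟨digitsOfFinset_le_one B, by rw [tsum_digitsOfFinset_mul, hB, hsA]⟩

/-- If `β ∈ (1,2]` satisfies `1 = Σ_{i=1}^N β^{-n_i}` for pairwise distinct
`n_1 < ... < n_N` in `ℕ`, and `s ∈ [0,1]` has a `β`-expansion ending in `0^∞`
with at least one nonzero digit, then `s` has infinitely many distinct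
`β`-expansions. -/
theorem infinitely_many_beta_expansions (β : ℝ) (hβ1 : 1 < β) (hβ2 : β ≤ 2)
    (N : ℕ) (hN : 0 < N) (m : Fin N → ℕ) (hm : StrictMono m) (hm1 : ∀ i, 1 ≤ m i)
    (halg : (1 : ℝ) = ∑ i : Fin N, (β ^ (m i))⁻¹)
    (s : ℝ) (hs : s ∈ Set.Icc (0 : ℝ) 1)
    (x : ℕ → ℕ) (hx : ∀ i, x i ≤ 1)
    (hexp : ∑' i : ℕ, (x i : ℝ) * (β ^ (i + 1))⁻¹ = s)
    (htail : ∃ M : ℕ, ∀ i, M ≤ i → x i = 0)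
    (hnonzero : ∃ j, x j ≠ 0) :
    Set.Infinite {y : ℕ → ℕ | (∀ i, y i ≤ 1) ∧
      ∑' i : ℕ, (y i : ℝ) * (β ^ (i + 1))⁻¹ = s} :=
  infinitely_many_beta_expansions_general β N hN m hm hm1 halg s x hx hexp htail hnonzero
end

section
/- Let β ∈ (1,2) be an algebraic integer whose minimal polynomial has constant term T_β with |T_β| ≥ 2 (class 𝒞). Then distinct words represent distinct values: for all n and all x ≠ y ∈ {0,1}^n, Σ_{i=1}^n x_i β^{-i} ≠ Σ_{i=1}^n y_i β^{-i}. -/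
open Polynomial

/-!
If two `{0,1}`-words had the same value in base `β`, then `β` would be a root of a nonzero
polynomial with coefficients in `{-1, 0, 1}`. That polynomial is a multiple of the minimal
polynomial `P_β` of `β`, and lowest nonzero coefficients multiply, so the constant term of `P_β`
divides a coefficient of absolute value at most `1`, contradicting `|P_β(0)| ≥ 2`.
-/

namespace Polynomial

theorem abs_trailingCoeff_le_of_dvd {p q : ℤ[X]} (hpq : p ∣ q) (hq : q ≠ 0) :
    |p.trailingCoeff| ≤ |q.trailingCoeff| := by
  obtain ⟨r, rfl⟩ := hpq
  have hr : r.trailingCoeff ≠ 0 := mt trailingCoeff_eq_zero.mp (right_ne_zero_of_mul hq)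
  rw [trailingCoeff_mul, abs_mul]
  exact le_mul_of_one_le_right (abs_nonneg _) (Int.one_le_abs hr)

theorem abs_coeff_ofFn_le {n : ℕ} {v : Fin n → ℤ} {c : ℤ} (hc : 0 ≤ c) (hv : ∀ i, |v i| ≤ c)
    (k : ℕ) : |(ofFn n v).coeff k| ≤ c := by
  rcases lt_or_ge k n with hk | hk
  · rw [ofFn_coeff_eq_val_of_lt v hk]
    exact hv _
  · rwa [ofFn_coeff_eq_zero_of_ge v hk, abs_zero]

theorem aeval_ofFn_comp_rev {K : Type*} [Field K] {β : K} (hβ : β ≠ 0) {n : ℕ} (d : Fin n → ℤ) :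
    aeval β (ofFn n (d ∘ Fin.rev)) = β ^ n * ∑ i : Fin n, (d i : K) * (β ^ ((i : ℕ) + 1))⁻¹ := by
  rw [ofFn_eq_sum_monomial, map_sum, Finset.mul_sum,
    ← Equiv.sum_comp Fin.revPerm]
  refine Finset.sum_congr rfl fun i _ => ?_
  have hsplit : β ^ n = β ^ ((Fin.rev i : ℕ)) * β ^ ((i : ℕ) + 1) := by
    rw [← pow_add, Fin.val_rev]
    congr 1
    omega
  simp only [Fin.revPerm_apply, Function.comp_apply, Fin.rev_rev, aeval_monomial,
    algebraMap_int_eq, eq_intCast, hsplit]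
  field_simp

end Polynomial

theorem minpoly.abs_coeff_zero_le_one_of_aeval_eq_zero {S : Type*} [CommRing S] [IsDomain S]
    [CharZero S] {β : S} (hβ : IsIntegral ℤ β) {q : ℤ[X]}
    (hq0 : q ≠ 0) (hq : ∀ k, |q.coeff k| ≤ 1) (hroot : Polynomial.aeval β q = 0) :
    |(minpoly ℤ β).coeff 0| ≤ 1 := by
  by_cases h0 : (minpoly ℤ β).coeff 0 = 0
  · simp [h0]
  calc |(minpoly ℤ β).coeff 0| = |(minpoly ℤ β).trailingCoeff| := by
        rw [trailingCoeff_eq_coeff_zero h0]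
    _ ≤ |q.trailingCoeff| :=
        abs_trailingCoeff_le_of_dvd (minpoly.isIntegrallyClosed_dvd hβ hroot) hq0
    _ ≤ 1 := hq _

theorem class_C_no_multiplicities_general (β : ℝ)
    (hint : IsIntegral ℤ β) (hT : 2 ≤ |(minpoly ℤ β).coeff 0|)
    (n : ℕ) (x y : Fin n → Fin 2) (hxy : x ≠ y) :
    (∑ i : Fin n, ((x i : ℕ) : ℝ) * (β ^ ((i : ℕ) + 1))⁻¹)
      ≠ ∑ i : Fin n, ((y i : ℕ) : ℝ) * (β ^ ((i : ℕ) + 1))⁻¹ := by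
  intro heq
  have hβ : β ≠ 0 := by
    rintro rfl
    have h0 := coeff_zero_eq_aeval_zero' (A := ℝ) (minpoly ℤ (0 : ℝ))
    rw [minpoly.aeval, algebraMap_int_eq, eq_intCast, Int.cast_eq_zero] at h0
    simp [h0] at hT
  set d : Fin n → ℤ := fun i => (x i : ℤ) - (y i : ℤ)
  have hd : d ∘ Fin.rev ≠ 0 := fun h => hxy <| funext fun i => by
    have hi := congrFun h (Fin.rev i)
    simp only [Function.comp_apply, Fin.rev_rev, Pi.zero_apply, d, sub_eq_zero] at hi
    exact Fin.ext (by exact_mod_cast hi)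
  have hdigit : ∀ i, |(d ∘ Fin.rev) i| ≤ 1 := fun i => by
    have := (x (Fin.rev i)).is_lt
    have := (y (Fin.rev i)).is_lt
    simp only [Function.comp_apply, d, abs_le]
    omega
  have hroot : aeval β (ofFn n (d ∘ Fin.rev)) = 0 := by
    rw [aeval_ofFn_comp_rev hβ]
    simp [d, sub_mul, Finset.sum_sub_distrib, heq]
  have hq0 : ofFn n (d ∘ Fin.rev) ≠ 0 := by
    rwa [Ne, ← map_zero (ofFn n), (injective_ofFn n).eq_iff]
  have hT' := minpoly.abs_coeff_zero_le_one_of_aeval_eq_zero hint hq0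
    (abs_coeff_ofFn_le zero_le_one hdigit) hroot
  linarith

/-- If `β ∈ (1,2)` is an algebraic integer whose (monic, integer) minimal
polynomial has constant term `T_β` with `|T_β| ≥ 2`, then distinct `{0,1}`-words
of length `n` represent distinct values in base `β`. -/
theorem class_C_no_multiplicities (β : ℝ) (hβ1 : 1 < β) (hβ2 : β < 2)
    (hint : IsIntegral ℤ β) (hT : 2 ≤ |(minpoly ℤ β).coeff 0|)
    (n : ℕ) (x y : Fin n → Fin 2) (hxy : x ≠ y) :
    (∑ i : Fin n, ((x i : ℕ) : ℝ) * (β ^ ((i : ℕ) + 1))⁻¹)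
      ≠ ∑ i : Fin n, ((y i : ℕ) : ℝ) * (β ^ ((i : ℕ) + 1))⁻¹ :=
  class_C_no_multiplicities_general β hint hT n x y hxy
end
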